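/- Suppose m = 0 and the maintained assumptions hold, so that Δ = T1·T2 and the m = 0 comparative statics are dq2/dσ2 = q2/(2(1−b2)(1−σ2)²θ2·T2) and dr2/dσ2 = q2/((1−σ2)²θ2·T2). Then the home government's first-order condition for the product-R&D subsidy, q2·(dq2/dσ2) − (σ2·q2/(1−σ2))·(dr2/dσ2) = 0, holds if and only if σ2 = 1/(1 + 2(1−b2)). Moreover, the function b2 ↦ 1/(1 + 2(1−b2)) is strictly increasing on (0,1): the optimal product-R&D subsidy is increasing in the strength of the home network externality. -/

import Mathlib

/-- Effective slope term of the foreign firm's best response under product R&D. -/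
noncomputable def Tone (b1 t σ1 θ1 : ℝ) : ℝ :=
  1 - (1 - t) / (2 * (1 - b1) * (1 - σ1) * θ1)

/-- Effective slope term of the home firm's best response under product R&D. -/
noncomputable def Ttwo (b2 σ2 θ2 : ℝ) : ℝ :=
  1 - 1 / (2 * (1 - b2) * (1 - σ2) * θ2)

/-- Network-interaction term `M = m² / (4(1−b1)(1−b2))`. -/
noncomputable def Mnet (m b1 b2 : ℝ) : ℝ := m ^ 2 / (4 * (1 - b1) * (1 - b2))

/-- Determinant `Δ = T1·T2 − M` of the product-R&D equilibrium system. -/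
noncomputable def Dr (m b1 b2 t σ1 σ2 θ1 θ2 : ℝ) : ℝ :=
  Tone b1 t σ1 θ1 * Ttwo b2 σ2 θ2 - Mnet m b1 b2

/-- Equilibrium foreign output `q1` under product R&D. -/
noncomputable def q1p (a c1 c2 m b1 b2 t σ1 σ2 θ1 θ2 : ℝ) : ℝ :=
  ((a - c1 / (1 - t)) * Ttwo b2 σ2 θ2 / (2 * (1 - b1))
      - m * (a - c2) / (2 * (1 - b2))) / Dr m b1 b2 t σ1 σ2 θ1 θ2

/-- Equilibrium home output `q2` under product R&D. -/
noncomputable def q2p (a c1 c2 m b1 b2 t σ1 σ2 θ1 θ2 : ℝ) : ℝ :=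
  ((a - c2) * Tone b1 t σ1 θ1 / (2 * (1 - b2))
      - m * (a - c1 / (1 - t)) / (2 * (1 - b1))) / Dr m b1 b2 t σ1 σ2 θ1 θ2

/-- Equilibrium foreign product R&D `r1 = (1−t)q1 / ((1−σ1)θ1)`. -/
noncomputable def r1p (a c1 c2 m b1 b2 t σ1 σ2 θ1 θ2 : ℝ) : ℝ :=
  (1 - t) * q1p a c1 c2 m b1 b2 t σ1 σ2 θ1 θ2 / ((1 - σ1) * θ1)

/-- Equilibrium home product R&D `r2 = q2 / ((1−σ2)θ2)`. -/
noncomputable def r2p (a c1 c2 m b1 b2 t σ1 σ2 θ1 θ2 : ℝ) : ℝ :=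
  q2p a c1 c2 m b1 b2 t σ1 σ2 θ1 θ2 / ((1 - σ2) * θ2)

/-- With independent goods (`m = 0`), `Δ = T1·T2` and the home
government's first-order condition `q2·(dq2/dσ2) − (σ2·q2/(1−σ2))·(dr2/dσ2) = 0`
(with the `m = 0` comparative statics) holds iff `σ2 = 1/(1+2(1−b2))`; moreover,
`b2 ↦ 1/(1+2(1−b2))` is strictly increasing on `(0,1)`. -/
theorem home_subsidy_optimum_productRD
    (a c1 c2 m b1 b2 t σ1 σ2 θ1 θ2 : ℝ)
    (ha : 0 < a) (hc1 : 0 < c1) (hc2 : 0 < c2)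
    (hb1 : b1 ∈ Set.Ioo (0 : ℝ) 1) (hb2 : b2 ∈ Set.Ioo (0 : ℝ) 1)
    (ht : t ∈ Set.Ioo (0 : ℝ) 1)
    (hσ1 : σ1 ∈ Set.Ioo (0 : ℝ) 1) (hσ2 : σ2 ∈ Set.Ioo (0 : ℝ) 1)
    (hθ1 : 0 < θ1) (hθ2 : 0 < θ2)
    (hT1 : Tone b1 t σ1 θ1 > 0) (hT2 : Ttwo b2 σ2 θ2 > 0)
    (hΔ : Dr m b1 b2 t σ1 σ2 θ1 θ2 > 0)
    (hq1 : q1p a c1 c2 m b1 b2 t σ1 σ2 θ1 θ2 > 0)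
    (hq2 : q2p a c1 c2 m b1 b2 t σ1 σ2 θ1 θ2 > 0)
    (hm : m = 0) :
    Dr m b1 b2 t σ1 σ2 θ1 θ2 = Tone b1 t σ1 θ1 * Ttwo b2 σ2 θ2 ∧
    (q2p a c1 c2 m b1 b2 t σ1 σ2 θ1 θ2 *
        (q2p a c1 c2 m b1 b2 t σ1 σ2 θ1 θ2 /
          (2 * (1 - b2) * (1 - σ2) ^ 2 * θ2 * Ttwo b2 σ2 θ2))
      - (σ2 * q2p a c1 c2 m b1 b2 t σ1 σ2 θ1 θ2 / (1 - σ2)) *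
        (q2p a c1 c2 m b1 b2 t σ1 σ2 θ1 θ2 /
          ((1 - σ2) ^ 2 * θ2 * Ttwo b2 σ2 θ2)) = 0
      ↔ σ2 = 1 / (1 + 2 * (1 - b2))) ∧
    StrictMonoOn (fun β : ℝ => 1 / (1 + 2 * (1 - β))) (Set.Ioo (0 : ℝ) 1) := by

  obtain ⟨hb2l, hb2r⟩ := hb2
  obtain ⟨hσ2l, hσ2r⟩ := hσ2
  have hb2' : (0:ℝ) < 1 - b2 := by linarith
  have hσ2' : (0:ℝ) < 1 - σ2 := by linarith
  set Q := q2p a c1 c2 m b1 b2 t σ1 σ2 θ1 θ2 with hQ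
  set T := Ttwo b2 σ2 θ2 with hT
  refine ⟨?_, ?_, ?_⟩
  · simp [Dr, Mnet, hm, hT]
  · have hQne : Q ≠ 0 := ne_of_gt hq2
    have hTne : T ≠ 0 := ne_of_gt hT2
    have h2 : Q * (Q / (2 * (1 - b2) * (1 - σ2) ^ 2 * θ2 * T))
        - (σ2 * Q / (1 - σ2)) * (Q / ((1 - σ2) ^ 2 * θ2 * T))
        = Q ^ 2 * ((1 - σ2) - 2 * (1 - b2) * σ2) /
          (2 * (1 - b2) * (1 - σ2) ^ 3 * θ2 * T) := by
      field_simp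
    have hden : (1 + 2 * (1 - b2)) ≠ 0 := by nlinarith
    constructor
    · intro h
      have key : (1 - σ2) - 2 * (1 - b2) * σ2 = 0 := by
        rw [h2] at h
        have hd : 2 * (1 - b2) * (1 - σ2) ^ 3 * θ2 * T ≠ 0 := by positivity
        have := (div_eq_zero_iff.mp h).resolve_right hd
        rcases mul_eq_zero.mp this with h3 | h3
        · exact absurd h3 (by positivity)
        · exact h3
      field_simp
      linarith
    · intro h
      have hσ : σ2 * (1 + 2 * (1 - b2)) = 1 := by
        rw [h]; field_simp
      rw [h2]
      have : (1 - σ2) - 2 * (1 - b2) * σ2 = 0 := by linarith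
      rw [this]
      simp
  · intro x hx y hy hxy
    have hx' : (0:ℝ) < 1 + 2 * (1 - x) := by simp at hx; nlinarith [hx.2]
    have hy' : (0:ℝ) < 1 + 2 * (1 - y) := by simp at hy; nlinarith [hy.2]
    simp only
    rw [div_lt_div_iff₀ hx' hy']
    nlinarith
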